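/- arXiv:2505.23573 — 5 statements merged into one kernel-verified Lean document; each statement's English description precedes it below -/
import Mathlib

section
/- For every x ≥ 2, the sum over primes p ≤ x of (log p)/p equals log x + O(1); that is, there is an absolute constant C such that |∑_{p ≤ x, p prime} (log p)/p − log x| ≤ C for all x ≥ 2. -/
open Finset ArithmeticFunction

/-! Auxiliary lemmas for Mertens' first theorem. -/

lemma mertens_divisors_eq_filter {m n : ℕ} (hm : 0 < m) (hmn : m ≤ n) :
    m.divisors = (Finset.Ioc 0 n).filter (· ∣ m) := by
  ext d
  simp only [Nat.mem_divisors, Finset.mem_filter, Finset.mem_Ioc]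
  constructor
  · rintro ⟨hd, -⟩
    exact ⟨⟨Nat.pos_of_dvd_of_pos hd hm, (Nat.le_of_dvd hm hd).trans hmn⟩, hd⟩
  · rintro ⟨-, hd⟩; exact ⟨hd, hm.ne'⟩

lemma mertens_sum_log_eq (n : ℕ) :
    ∑ m ∈ Finset.Ioc 0 n, Real.log m = ∑ d ∈ Finset.Ioc 0 n, Λ d * ((n / d : ℕ) : ℝ) := by
  calc ∑ m ∈ Ioc 0 n, Real.log m = ∑ m ∈ Ioc 0 n, ∑ d ∈ (m : ℕ).divisors, Λ d := by
        refine sum_congr rfl fun m hm => ?_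
        rw [vonMangoldt_sum]
    _ = ∑ m ∈ Ioc 0 n, ∑ d ∈ Ioc 0 n, if d ∣ m then Λ d else 0 := by
        refine sum_congr rfl fun m hm => ?_
        rw [mertens_divisors_eq_filter (mem_Ioc.mp hm).1 (mem_Ioc.mp hm).2, sum_filter]
    _ = ∑ d ∈ Ioc 0 n, ((Ioc 0 n).filter (fun m => d ∣ m)).card • Λ d := by
        rw [Finset.sum_comm]
        refine sum_congr rfl fun d _ => ?_
        rw [← Finset.sum_filter, Finset.sum_const]
    _ = _ := by
        refine sum_congr rfl fun d _ => ?_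
        rw [Nat.Ioc_filter_dvd_card_eq_div, nsmul_eq_mul, mul_comm]

lemma mertens_sum_log_le (n : ℕ) : ∑ m ∈ Finset.Ioc 0 n, Real.log m ≤ n * Real.log n := by
  calc ∑ m ∈ Ioc 0 n, Real.log m ≤ ∑ _m ∈ Ioc 0 n, Real.log n := by
        refine sum_le_sum fun m hm => Real.log_le_log ?_ ?_
        · exact_mod_cast (mem_Ioc.mp hm).1
        · exact_mod_cast (mem_Ioc.mp hm).2
    _ = n * Real.log n := by rw [sum_const, Nat.card_Ioc, Nat.sub_zero, nsmul_eq_mul]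

lemma mertens_le_sum_log {n : ℕ} (hn : 1 ≤ n) :
    (n : ℝ) * Real.log n - n ≤ ∑ m ∈ Finset.Ioc 0 n, Real.log m := by
  have hfac : ∑ m ∈ Finset.Ioc 0 n, Real.log m = Real.log (n.factorial : ℝ) := by
    rw [← Real.log_prod (fun m hm => by
      exact_mod_cast (Finset.mem_Ioc.mp hm).1.ne')]
    congr 1
    rw [← Nat.cast_prod]
    congr 1
    rw [← Finset.prod_range_add_one_eq_factorial]
    rw [show Finset.Ioc 0 n = Finset.Ico 1 (n+1) by rfl, Finset.prod_Ico_eq_prod_range]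
    simp [Nat.add_comm]
  rw [hfac]
  have key : ((n : ℝ)) ^ n / (n.factorial : ℝ) ≤ Real.exp n := by
    refine le_trans ?_ (Real.sum_le_exp_of_nonneg (by positivity) (n + 1))
    exact Finset.single_le_sum (f := fun i => (n:ℝ)^i / (i.factorial : ℝ))
      (fun i _ => by positivity) (Finset.self_mem_range_succ n)
  have hfacpos : (0:ℝ) < (n.factorial : ℝ) := by exact_mod_cast Nat.factorial_pos n
  have h2 : ((n:ℝ)) ^ n ≤ Real.exp n * (n.factorial : ℝ) := by
    rw [div_le_iff₀ hfacpos] at key; linarith [key]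
  have h3 := Real.log_le_log (by positivity) h2
  rw [Real.log_pow, Real.log_mul (Real.exp_ne_zero _) hfacpos.ne', Real.log_exp] at h3
  linarith

lemma mertens_theta_le (n : ℕ) :
    ∑ p ∈ (Finset.Iic n).filter Nat.Prime, Real.log p ≤ n * Real.log 4 := by
  have hIic : Finset.Iic n = Finset.range (n + 1) := by
    ext m; simp [Nat.lt_succ_iff]
  have h := primorial_le_4_pow n
  have h' : (primorial n : ℝ) ≤ ((4:ℝ)) ^ n := by exact_mod_cast h
  have hpos : ∀ p ∈ (Finset.range (n+1)).filter Nat.Prime, (p : ℝ) ≠ 0 := by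
    intro p hp
    exact_mod_cast (Nat.Prime.pos (Finset.mem_filter.mp hp).2).ne'
  have hppos : (0:ℝ) < (primorial n : ℝ) := by exact_mod_cast primorial_pos n
  have hlog := Real.log_le_log hppos h'
  rw [Real.log_pow] at hlog
  calc ∑ p ∈ (Finset.Iic n).filter Nat.Prime, Real.log p
      = Real.log (primorial n : ℝ) := by
        rw [hIic, primorial, Nat.cast_prod, Real.log_prod hpos]
    _ ≤ n * Real.log 4 := hlog

lemma mertens_geom_tail {p : ℕ} (hp : 2 ≤ p) (n : ℕ) :
    ∑ k ∈ Finset.Icc 2 n, (1 / (p:ℝ)) ^ k ≤ 2 / (p:ℝ) ^ 2 := by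
  set r : ℝ := 1 / (p:ℝ) with hr
  have hp0 : (0:ℝ) < p := by exact_mod_cast Nat.lt_of_lt_of_le two_pos hp
  have hr0 : 0 ≤ r := by positivity
  have hrhalf : r ≤ 1 / 2 := by
    rw [hr, div_le_div_iff₀ hp0 two_pos]
    norm_num
    exact_mod_cast hp
  have hr1 : r < 1 := lt_of_le_of_lt hrhalf (by norm_num)
  have hsum : Summable fun k : ℕ => r ^ k := summable_geometric_of_lt_one hr0 hr1
  calc ∑ k ∈ Finset.Icc 2 n, r ^ k
      = ∑ i ∈ Finset.range (n + 1 - 2), r ^ (2 + i) := by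
        rw [show Finset.Icc 2 n = Finset.Ico 2 (n+1) by rfl, Finset.sum_Ico_eq_sum_range]
    _ = r ^ 2 * ∑ i ∈ Finset.range (n + 1 - 2), r ^ i := by
        rw [Finset.mul_sum]; exact Finset.sum_congr rfl fun i _ => by rw [pow_add]
    _ ≤ r ^ 2 * (1 - r)⁻¹ := by
        refine mul_le_mul_of_nonneg_left ?_ (by positivity)
        refine le_trans (hsum.sum_le_tsum _ (fun i _ => by positivity)) ?_
        rw [tsum_geometric_of_lt_one hr0 hr1]
    _ ≤ r ^ 2 * 2 := by
        refine mul_le_mul_of_nonneg_left ?_ (by positivity)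
        rw [inv_le_comm₀ (by linarith) two_pos]
        linarith
    _ = 2 / (p:ℝ) ^ 2 := by
        rw [hr]; field_simp

lemma mertens_log_le_two_sqrt {x : ℝ} (hx : 0 ≤ x) : Real.log x ≤ 2 * Real.sqrt x := by
  rcases eq_or_lt_of_le hx with h | h
  · simp [← h]
  have h1 : Real.log x = 2 * Real.log (Real.sqrt x) := by
    rw [Real.log_sqrt hx]; ring
  have h2 : Real.log (Real.sqrt x) ≤ Real.sqrt x - 1 :=
    Real.log_le_sub_one_of_pos (Real.sqrt_pos.mpr h)
  nlinarith [Real.sqrt_nonneg x]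

lemma mertens_exists_tail_const : ∃ K : ℝ, 0 ≤ K ∧ ∀ n : ℕ,
    ∑ m ∈ Finset.Iic n, 2 * Real.log m / (m:ℝ) ^ 2 ≤ K := by
  have hsummable : Summable (fun m : ℕ => 8 * (1 / (m:ℝ) ^ ((3:ℝ)/2))) := by
    exact (Real.summable_one_div_nat_rpow.mpr (by norm_num)).mul_left 8
  refine ⟨∑' m : ℕ, 8 * (1 / (m:ℝ) ^ ((3:ℝ)/2)), tsum_nonneg fun m => by positivity, fun n => ?_⟩
  refine le_trans (Finset.sum_le_sum (fun m _ => ?_))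
    (hsummable.sum_le_tsum _ (fun m _ => by positivity))
  rcases Nat.eq_zero_or_pos m with rfl | hm
  · simp
  have hm1 : (1:ℝ) ≤ (m:ℝ) := by exact_mod_cast hm
  have hm0 : (0:ℝ) < (m:ℝ) := by linarith
  have hlog : Real.log m ≤ 2 * Real.sqrt m := mertens_log_le_two_sqrt hm0.le
  have hsqrt : Real.sqrt m = (m:ℝ) ^ ((1:ℝ)/2) := by
    rw [Real.sqrt_eq_rpow]
  have hpow : ((m:ℝ) ^ 2 : ℝ) = (m:ℝ) ^ ((2:ℝ)) := by
    rw [← Real.rpow_natCast (m:ℝ) 2]; norm_num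
  have hratio : Real.sqrt m / (m:ℝ) ^ 2 = 1 / (m:ℝ) ^ ((3:ℝ)/2) := by
    rw [hsqrt, hpow, ← Real.rpow_sub hm0]
    norm_num
    rw [Real.rpow_neg hm0.le, ← one_div]
  calc 2 * Real.log m / (m:ℝ) ^ 2 ≤ 2 * (2 * Real.sqrt m) / (m:ℝ) ^ 2 := by
        apply div_le_div_of_nonneg_right ?_ (by positivity)
        · linarith
    _ = 4 * (Real.sqrt m / (m:ℝ) ^ 2) := by ring
    _ = 4 * (1 / (m:ℝ) ^ ((3:ℝ)/2)) := by rw [hratio]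
    _ ≤ 8 * (1 / (m:ℝ) ^ ((3:ℝ)/2)) := by
        have : (0:ℝ) ≤ 1 / (m:ℝ) ^ ((3:ℝ)/2) := by positivity
        nlinarith

lemma mertens_tail_mem {n d : ℕ}
    (hd : d ∈ (Finset.Ioc 0 n).filter (fun d => IsPrimePow d ∧ ¬ d.Prime)) :
    (d.minFac).Prime ∧ 2 ≤ d.factorization d.minFac ∧
      d.minFac ^ d.factorization d.minFac = d := by
  rw [Finset.mem_filter, Finset.mem_Ioc] at hd
  obtain ⟨⟨hd0, hdn⟩, hpp, hnp⟩ := hd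
  have h1 : 1 < d := hpp.one_lt
  have hp : (d.minFac).Prime := Nat.minFac_prime (by omega)
  have heq : d.minFac ^ d.factorization d.minFac = d := hpp.minFac_pow_factorization_eq
  refine ⟨hp, ?_, heq⟩
  by_contra hk
  push_neg at hk
  interval_cases h : d.factorization d.minFac
  · rw [pow_zero] at heq; omega
  · rw [pow_one] at heq; exact hnp (heq ▸ hp)

lemma mertens_tail_reindex (n : ℕ) :
    ∑ d ∈ (Finset.Ioc 0 n).filter (fun d => IsPrimePow d ∧ ¬ d.Prime), Λ d / d
      ≤ ∑ q ∈ ((Finset.Iic n).filter Nat.Prime) ×ˢ Finset.Icc 2 n,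
          Real.log q.1 / (q.1 : ℝ) ^ q.2 := by
  set D := (Finset.Ioc 0 n).filter (fun d => IsPrimePow d ∧ ¬ d.Prime) with hD
  set φ : ℕ → ℕ × ℕ := fun d => (d.minFac, d.factorization d.minFac) with hφ
  set g : ℕ × ℕ → ℝ := fun q => Real.log q.1 / (q.1 : ℝ) ^ q.2 with hg
  have hterm : ∀ d ∈ D, Λ d / (d : ℝ) = g (φ d) := by
    intro d hd
    obtain ⟨hp, hk2, heq⟩ := mertens_tail_mem hd
    have hppd : IsPrimePow d := (Finset.mem_filter.mp hd).2.1
    rw [hg, hφ]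
    simp only []
    rw [vonMangoldt_apply, if_pos hppd]
    congr 1
    exact_mod_cast (congrArg (Nat.cast (R := ℝ)) heq).symm
  have hinj : Set.InjOn φ ↑D := by
    intro a ha b hb hab
    obtain ⟨-, -, ha3⟩ := mertens_tail_mem ha
    obtain ⟨-, -, hb3⟩ := mertens_tail_mem hb
    have h1 : a.minFac = b.minFac := congrArg Prod.fst hab
    have h2 : a.factorization a.minFac = b.factorization b.minFac := congrArg Prod.snd hab
    rw [← ha3, ← hb3, h1]
    rw [h1] at h2
    rw [h2]
  have hsub : D.image φ ⊆ ((Finset.Iic n).filter Nat.Prime) ×ˢ Finset.Icc 2 n := by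
    intro q hq
    obtain ⟨d, hd, rfl⟩ := Finset.mem_image.mp hq
    obtain ⟨hp, hk2, heq⟩ := mertens_tail_mem hd
    rw [Finset.mem_filter, Finset.mem_Ioc] at hd
    obtain ⟨⟨hd0, hdn⟩, -⟩ := hd
    rw [Finset.mem_product, Finset.mem_filter, Finset.mem_Iic, Finset.mem_Icc]
    have hpled : d.minFac ≤ d := Nat.minFac_le hd0
    have hkled : d.factorization d.minFac ≤ n := by
      have h2k : 2 ^ d.factorization d.minFac ≤ d := by
        calc 2 ^ d.factorization d.minFac ≤ d.minFac ^ d.factorization d.minFac :=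
              Nat.pow_le_pow_left hp.two_le _
          _ = d := heq
      have := Nat.lt_two_pow_self (n := d.factorization d.minFac)
      omega
    exact ⟨⟨hpled.trans hdn, hp⟩, hk2, hkled⟩
  calc ∑ d ∈ D, Λ d / (d:ℝ) = ∑ d ∈ D, g (φ d) := Finset.sum_congr rfl hterm
    _ = ∑ q ∈ D.image φ, g q := (Finset.sum_image (fun a ha b hb => hinj ha hb)).symm
    _ ≤ ∑ q ∈ ((Finset.Iic n).filter Nat.Prime) ×ˢ Finset.Icc 2 n, g q := by
        refine Finset.sum_le_sum_of_subset_of_nonneg hsub fun q hq _ => ?_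
        rw [Finset.mem_product, Finset.mem_filter] at hq
        have : (1:ℝ) ≤ (q.1 : ℝ) := by exact_mod_cast hq.1.2.one_lt.le
        have h0 : (0:ℝ) ≤ Real.log q.1 := Real.log_nonneg this
        positivity

lemma mertens_pairs_le (n : ℕ) :
    ∑ q ∈ ((Finset.Iic n).filter Nat.Prime) ×ˢ Finset.Icc 2 n,
        Real.log q.1 / (q.1 : ℝ) ^ q.2
      ≤ ∑ m ∈ Finset.Iic n, 2 * Real.log m / (m:ℝ) ^ 2 := by
  rw [Finset.sum_product]
  have step1 : ∀ p ∈ (Finset.Iic n).filter Nat.Prime,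
      ∑ k ∈ Finset.Icc 2 n, Real.log p / (p:ℝ) ^ k ≤ 2 * Real.log p / (p:ℝ) ^ 2 := by
    intro p hp
    have hpp := (Finset.mem_filter.mp hp).2
    have hp2 : (2:ℕ) ≤ p := hpp.two_le
    have hlog : (0:ℝ) ≤ Real.log p := Real.log_nonneg (by exact_mod_cast hpp.one_lt.le)
    calc ∑ k ∈ Finset.Icc 2 n, Real.log p / (p:ℝ) ^ k
        = Real.log p * ∑ k ∈ Finset.Icc 2 n, (1 / (p:ℝ)) ^ k := by
          rw [Finset.mul_sum]
          refine Finset.sum_congr rfl fun k _ => ?_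
          rw [div_pow, one_pow]
          ring
      _ ≤ Real.log p * (2 / (p:ℝ) ^ 2) :=
          mul_le_mul_of_nonneg_left (mertens_geom_tail hp2 n) hlog
      _ = 2 * Real.log p / (p:ℝ) ^ 2 := by ring
  refine le_trans (Finset.sum_le_sum step1) ?_
  refine Finset.sum_le_sum_of_subset_of_nonneg (Finset.filter_subset _ _) fun m hm _ => ?_
  rcases Nat.eq_zero_or_pos m with rfl | hm0
  · simp
  have : (1:ℝ) ≤ (m:ℝ) := by exact_mod_cast hm0
  have := Real.log_nonneg this
  positivity

lemma mertens_tail_bound : ∃ K : ℝ, 0 ≤ K ∧ ∀ n : ℕ,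
    ∑ d ∈ (Finset.Ioc 0 n).filter (fun d => IsPrimePow d ∧ ¬ d.Prime), Λ d / d ≤ K := by
  obtain ⟨K, hK0, hK⟩ := mertens_exists_tail_const
  exact ⟨K, hK0, fun n =>
    le_trans (mertens_tail_reindex n) (le_trans (mertens_pairs_le n) (hK n))⟩

lemma mertens_prime_filter_eq (n : ℕ) :
    (Finset.Iic n).filter Nat.Prime = (Finset.Ioc 0 n).filter Nat.Prime := by
  ext p
  simp only [Finset.mem_filter, Finset.mem_Iic, Finset.mem_Ioc]
  exact ⟨fun ⟨h1, h2⟩ => ⟨⟨h2.pos, h1⟩, h2⟩, fun ⟨⟨_, h1⟩, h2⟩ => ⟨h1, h2⟩⟩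

lemma mertens_split_sum (n : ℕ) (t : ℕ → ℝ) :
    ∑ d ∈ Finset.Ioc 0 n, Λ d * t d
      = ∑ p ∈ (Finset.Iic n).filter Nat.Prime, Real.log p * t p
        + ∑ d ∈ (Finset.Ioc 0 n).filter (fun d => IsPrimePow d ∧ ¬ d.Prime), Λ d * t d := by
  rw [mertens_prime_filter_eq]
  rw [← Finset.sum_filter_add_sum_filter_not (Finset.Ioc 0 n) Nat.Prime (fun d => Λ d * t d)]
  congr 1
  · exact Finset.sum_congr rfl fun p hp => by
      rw [vonMangoldt_apply_prime (Finset.mem_filter.mp hp).2]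
  · rw [← Finset.sum_filter_add_sum_filter_not
      ((Finset.Ioc 0 n).filter (fun d => ¬ d.Prime)) IsPrimePow (fun d => Λ d * t d)]
    have h2 : ∑ d ∈ ((Finset.Ioc 0 n).filter (fun d => ¬ d.Prime)).filter
        (fun d => ¬ IsPrimePow d), Λ d * t d = 0 := by
      refine Finset.sum_eq_zero fun d hd => ?_
      rw [Finset.mem_filter] at hd
      rw [vonMangoldt_eq_zero_iff.mpr hd.2, zero_mul]
    rw [h2, add_zero, Finset.filter_filter]
    exact Finset.sum_congr (by
      apply Finset.filter_congr
      intro d _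
      simp [and_comm]) fun _ _ => rfl

lemma mertens_nat : ∃ C₁ : ℝ, 0 ≤ C₁ ∧ ∀ n : ℕ, 1 ≤ n →
    |(∑ p ∈ (Finset.Iic n).filter Nat.Prime, Real.log p / p) - Real.log n| ≤ C₁ := by
  obtain ⟨K, hK0, hK⟩ := mertens_tail_bound
  refine ⟨1 + K + Real.log 4, by positivity, fun n hn => ?_⟩
  have hn0 : (0:ℝ) < n := by exact_mod_cast hn
  set P := (Finset.Iic n).filter Nat.Prime with hP
  set D := (Finset.Ioc 0 n).filter (fun d => IsPrimePow d ∧ ¬ d.Prime) with hD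
  set S : ℝ := ∑ p ∈ P, Real.log p / p with hS
  set θ : ℝ := ∑ p ∈ P, Real.log p with hθ
  set F : ℝ := ∑ m ∈ Finset.Ioc 0 n, Real.log m with hF
  set G : ℝ := ∑ p ∈ P, Real.log p * ((n / p : ℕ) : ℝ) with hG
  set ψD : ℝ := ∑ d ∈ D, Λ d * ((n / d : ℕ) : ℝ) with hψ
  have hsplit : F = G + ψD := by rw [hF, mertens_sum_log_eq, mertens_split_sum]
  have hPfact : ∀ p ∈ P, 2 ≤ p ∧ (0:ℝ) ≤ Real.log p := by
    intro p hp
    have := (Finset.mem_filter.mp hp).2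
    exact ⟨this.two_le, Real.log_nonneg (by exact_mod_cast this.one_lt.le)⟩
  have hGle : G ≤ n * S := by
    rw [hG, hS, Finset.mul_sum]
    refine Finset.sum_le_sum fun p hp => ?_
    obtain ⟨hp2, hlog⟩ := hPfact p hp
    have hp0 : (0:ℝ) < p := by exact_mod_cast Nat.lt_of_lt_of_le two_pos hp2
    calc Real.log p * ((n / p : ℕ) : ℝ) ≤ Real.log p * ((n:ℝ) / p) :=
          mul_le_mul_of_nonneg_left Nat.cast_div_le hlog
      _ = (n:ℝ) * (Real.log p / p) := by field_simp
  have hGge : n * S - θ ≤ G := by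
    rw [hG, hS, hθ, Finset.mul_sum, ← Finset.sum_sub_distrib]
    refine Finset.sum_le_sum fun p hp => ?_
    obtain ⟨hp2, hlog⟩ := hPfact p hp
    have hp0 : (0:ℝ) < p := by exact_mod_cast Nat.lt_of_lt_of_le two_pos hp2
    have hfloor : (n:ℝ) / p - 1 ≤ ((n / p : ℕ) : ℝ) := by
      have h1 : n < n / p * p + p := Nat.lt_div_mul_add (by omega)
      have h2 : (n:ℝ) < ((n/p : ℕ):ℝ) * p + p := by exact_mod_cast h1
      have h3 : (n:ℝ) / p ≤ ((n / p : ℕ) : ℝ) + 1 := by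
        rw [div_le_iff₀ hp0]; nlinarith
      linarith
    calc (n:ℝ) * (Real.log p / p) - Real.log p = Real.log p * ((n:ℝ)/p - 1) := by
          field_simp
      _ ≤ Real.log p * ((n / p : ℕ) : ℝ) := mul_le_mul_of_nonneg_left hfloor hlog
  have hψ0 : 0 ≤ ψD := Finset.sum_nonneg fun d _ => mul_nonneg vonMangoldt_nonneg (by positivity)
  have hψK : ψD ≤ n * K := by
    calc ψD ≤ ∑ d ∈ D, (n:ℝ) * (Λ d / d) := by
          refine Finset.sum_le_sum fun d hd => ?_
          have hd0 : 0 < d := (Finset.mem_Ioc.mp (Finset.mem_filter.mp hd).1).1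
          have hd0' : (0:ℝ) < d := by exact_mod_cast hd0
          calc Λ d * ((n / d : ℕ) : ℝ) ≤ Λ d * ((n:ℝ) / d) :=
                mul_le_mul_of_nonneg_left Nat.cast_div_le vonMangoldt_nonneg
            _ = (n:ℝ) * (Λ d / d) := by field_simp
      _ = (n:ℝ) * ∑ d ∈ D, Λ d / d := by rw [Finset.mul_sum]
      _ ≤ n * K := mul_le_mul_of_nonneg_left (hK n) hn0.le
  have hFub : F ≤ n * Real.log n := mertens_sum_log_le n
  have hFlb : (n:ℝ) * Real.log n - n ≤ F := mertens_le_sum_log hn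
  have hθub : θ ≤ n * Real.log 4 := mertens_theta_le n
  have hub : S ≤ Real.log n + Real.log 4 := by
    have h1 : n * S ≤ n * (Real.log n + Real.log 4) := by nlinarith
    exact le_of_mul_le_mul_left (by linarith [h1]) hn0
  have hlb : Real.log n - 1 - K ≤ S := by
    have h1 : n * (Real.log n - 1 - K) ≤ n * S := by nlinarith
    exact le_of_mul_le_mul_left (by linarith [h1]) hn0
  rw [abs_le]
  have h4 : (0:ℝ) ≤ Real.log 4 := Real.log_nonneg (by norm_num)
  constructor <;> [linarith; linarith]

theorem mertens_log_over_p :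
    ∃ C : ℝ, ∀ x : ℝ, 2 ≤ x →
      |(∑ p ∈ (Finset.Iic ⌊x⌋₊).filter Nat.Prime, Real.log p / p) - Real.log x| ≤ C := by
  obtain ⟨C₁, hC₁0, hC₁⟩ := mertens_nat
  refine ⟨C₁ + Real.log 2, fun x hx => ?_⟩
  set N := ⌊x⌋₊ with hN
  have hN2 : 2 ≤ N := Nat.le_floor (by exact_mod_cast hx)
  have hN1 : 1 ≤ N := by omega
  have hNx : (N:ℝ) ≤ x := Nat.floor_le (by linarith)
  have hN0 : (0:ℝ) < N := by exact_mod_cast Nat.lt_of_lt_of_le Nat.zero_lt_two hN2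
  have hxN : x < (N:ℝ) + 1 := Nat.lt_floor_add_one x
  have hx2N : x ≤ 2 * N := by
    have : (1:ℝ) ≤ (N:ℝ) := by exact_mod_cast hN1
    linarith
  have hlog1 : Real.log N ≤ Real.log x := Real.log_le_log hN0 hNx
  have hlog2 : Real.log x ≤ Real.log 2 + Real.log N := by
    calc Real.log x ≤ Real.log (2 * N) := Real.log_le_log (by linarith) hx2N
      _ = Real.log 2 + Real.log N := Real.log_mul two_ne_zero hN0.ne'
  have hmain := hC₁ N hN1
  rw [abs_le] at hmain ⊢
  constructor <;> [linarith [hmain.1]; linarith [hmain.2]]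
end

section
/- For α > 0 and y > 0, the contour integral (1/(2πi)) ∫_{(α)} y^s / s³ ds equals (log y)²/2 if y ≥ 1, and equals 0 if 0 < y ≤ 1. Here ∫_{(α)} denotes the integral along the vertical line Re(s) = α, i.e. ∫_{-∞}^{∞} y^{α+it}/(α+it)³ · i dt / (2πi). -/
open MeasureTheory Set Complex Filter

lemma tendsto_pow_exp_neg_mul (n : ℕ) {b : ℝ} (hb : 0 < b) :
    Tendsto (fun x : ℝ => x ^ n * Real.exp (-(b * x))) atTop (nhds 0) := by
  have comp : Tendsto (fun x : ℝ => b * x) atTop atTop :=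
    Tendsto.const_mul_atTop hb tendsto_id
  have h := ((Real.tendsto_pow_mul_exp_neg_atTop_nhds_zero n).comp comp).const_mul ((b ^ n)⁻¹)
  rw [mul_zero] at h
  refine h.congr fun x => ?_
  simp only [Function.comp_apply, mul_pow]
  field_simp

lemma key_integral {c : ℂ} (hc : 0 < c.re) :
    ∫ u in Ioi (0:ℝ), (u:ℂ)^2 * Complex.exp (-(c*u)) = 2 / c^3 := by
  have hc0 : c ≠ 0 := fun h => by simp [h] at hc
  have hcn : (0:ℝ) < ‖c‖ := norm_pos_iff.mpr hc0
  set F : ℝ → ℂ := fun u => -Complex.exp (-(c*u)) * (u^2/c + 2*u/c^2 + 2/c^3) with hF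
  have hderiv : ∀ x ∈ Ioi (0:ℝ), HasDerivAt F ((x:ℂ)^2 * Complex.exp (-(c*x))) x := by
    intro x _
    have h1 : HasDerivAt (fun u : ℝ => -(c*(u:ℂ))) (-c) x := by
      simpa using ((hasDerivAt_id x).ofReal_comp.const_mul (-c))
    have h2 : HasDerivAt (fun u : ℝ => Complex.exp (-(c*(u:ℂ)))) (Complex.exp (-(c*x)) * (-c)) x := by
      simpa [mul_comm, Function.comp_def] using (Complex.hasDerivAt_exp _).comp x h1
    have h3 : HasDerivAt (fun u : ℝ => ((u:ℂ)^2/c + 2*u/c^2 + 2/c^3))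
        ((2*x)/c + 2/c^2) x := by
      have hx2 : HasDerivAt (fun u : ℝ => ((u:ℂ)^2)) (2*x) x := by
        simpa using ((hasDerivAt_pow 2 (x:ℂ)).comp_ofReal)
      have := ((hx2.div_const c).add (((hasDerivAt_id x).ofReal_comp.const_mul (2:ℂ)).div_const (c^2))).add_const ((2:ℂ)/c^3)
      refine this.congr_deriv ?_
      push_cast
      ring
    have := (h2.neg.mul h3)
    refine this.congr_deriv ?_
    simp only [Pi.neg_apply]
    generalize Complex.exp (-(c*(x:ℂ))) = e
    field_simp
    ring_nf
  have hnorm : ∀ u : ℝ, 0 ≤ u → ‖F u‖ ≤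
      Real.exp (-(c.re*u)) * (u^2/‖c‖ + 2*u/‖c‖^2 + 2/‖c‖^3) := by
    intro u hu
    rw [hF]
    simp only [norm_mul, norm_neg]
    have he : ‖Complex.exp (-(c*u))‖ = Real.exp (-(c.re*u)) := by
      rw [Complex.norm_exp]
      norm_num
    rw [he]
    gcongr
    refine (norm_add₃_le).trans ?_
    have e1 : ‖((u:ℂ)^2/c)‖ = u^2/‖c‖ := by
      rw [norm_div, norm_pow, Complex.norm_real, Real.norm_eq_abs, _root_.abs_of_nonneg hu]
    have e2 : ‖(2*(u:ℂ)/c^2)‖ = 2*u/‖c‖^2 := by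
      rw [norm_div, norm_mul, norm_pow, Complex.norm_real, Real.norm_eq_abs, _root_.abs_of_nonneg hu]
      norm_num [Complex.norm_ofNat]
    have e3 : ‖((2:ℂ)/c^3)‖ = 2/‖c‖^3 := by
      rw [norm_div, norm_pow]
      norm_num
    rw [e1, e2, e3]
  have htend : Tendsto F atTop (nhds 0) := by
    have h2 := (tendsto_pow_exp_neg_mul 2 hc).mul_const (‖c‖⁻¹)
    have h1 := (tendsto_pow_exp_neg_mul 1 hc).mul_const (2/‖c‖^2)
    have h0 := (tendsto_pow_exp_neg_mul 0 hc).mul_const (2/‖c‖^3)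
    rw [zero_mul] at h2 h1 h0
    have hg := (h2.add h1).add h0
    rw [add_zero, add_zero] at hg
    have hg' : Tendsto (fun u : ℝ =>
        Real.exp (-(c.re*u)) * (u^2/‖c‖ + 2*u/‖c‖^2 + 2/‖c‖^3)) atTop (nhds 0) := by
      refine hg.congr fun u => ?_
      ring
    exact squeeze_zero_norm' (eventually_atTop.2 ⟨0, fun u hu => hnorm u hu⟩) hg'
  have hcont : ContinuousWithinAt F (Ici (0:ℝ)) 0 := by
    apply Continuous.continuousWithinAt
    fun_prop
  have hint : IntegrableOn (fun u : ℝ => (u:ℂ)^2 * Complex.exp (-(c*u))) (Ioi 0) := by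
    have h := integrableOn_rpow_mul_exp_neg_mul_rpow (by norm_num : (-1:ℝ) < 2) (by norm_num : (0:ℝ) < 1) hc
    refine Integrable.mono' h ?_ ?_
    · exact Continuous.aestronglyMeasurable (by fun_prop)
    · filter_upwards [ae_restrict_mem measurableSet_Ioi] with x hx
      have hx0 : (0:ℝ) < x := hx
      have he : ‖Complex.exp (-(c*x))‖ = Real.exp (-(c.re*x)) := by
        rw [Complex.norm_exp]
        norm_num
      rw [norm_mul, norm_pow, Complex.norm_real, Real.norm_eq_abs, _root_.abs_of_nonneg hx0.le, he,
        Real.rpow_one, show (2:ℝ) = ((2:ℕ):ℝ) by norm_num, Real.rpow_natCast, neg_mul]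
  rw [integral_Ioi_of_hasDerivAt_of_tendsto hcont hderiv hint htend]
  rw [hF]
  simp only [Complex.ofReal_zero, mul_zero, zero_mul, zero_div, add_zero, zero_add,
    neg_zero, Complex.exp_zero, zero_sub, ne_eq]
  norm_num

open scoped FourierTransform

noncomputable def gfun (α : ℝ) : ℝ → ℂ :=
  fun u => if 0 ≤ u then (u:ℂ)^2 * Complex.exp (-((α:ℂ)*u)) else 0

lemma gfun_cont (α : ℝ) : Continuous (gfun α) := by
  unfold gfun
  apply Continuous.if_le (by fun_prop) continuous_const continuous_const continuous_id
  intro x hx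
  have : x = 0 := hx.symm
  rw [this]
  simp

lemma gfun_integrable {α : ℝ} (hα : 0 < α) : MeasureTheory.Integrable (gfun α) := by
  have hre : (0:ℝ) < ((α:ℂ)).re := by simpa using hα
  have hint : MeasureTheory.IntegrableOn (fun u : ℝ => (u:ℂ)^2 * Complex.exp (-((α:ℂ)*u))) (Ici 0) := by
    rw [integrableOn_Ici_iff_integrableOn_Ioi]
    -- same as in key_integral; derive from rpow lemma
    have h := integrableOn_rpow_mul_exp_neg_mul_rpow (by norm_num : (-1:ℝ) < 2) (by norm_num : (0:ℝ) < 1) hα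
    refine MeasureTheory.Integrable.mono' h ?_ ?_
    · exact Continuous.aestronglyMeasurable (by fun_prop)
    · filter_upwards [MeasureTheory.ae_restrict_mem measurableSet_Ioi] with x hx
      have hx0 : (0:ℝ) < x := hx
      have he : ‖Complex.exp (-((α:ℂ)*x))‖ = Real.exp (-(α*x)) := by
        rw [Complex.norm_exp]
        norm_num
      rw [norm_mul, norm_pow, Complex.norm_real, Real.norm_eq_abs, _root_.abs_of_nonneg hx0.le, he,
        Real.rpow_one, show (2:ℝ) = ((2:ℕ):ℝ) by norm_num, Real.rpow_natCast, neg_mul]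
  have : gfun α = Set.indicator (Ici 0) (fun u : ℝ => (u:ℂ)^2 * Complex.exp (-((α:ℂ)*u))) := by
    funext u
    simp [gfun, Set.indicator_apply, mem_Ici]
  rw [this]
  exact hint.integrable_indicator measurableSet_Ici

lemma gfun_fourier {α : ℝ} (hα : 0 < α) (ξ : ℝ) :
    𝓕 (gfun α) ξ = 2 / ((α:ℂ) + (2*Real.pi*ξ)*Complex.I)^3 := by
  set c : ℂ := (α:ℂ) + (2*Real.pi*ξ)*Complex.I with hc
  have hcre : 0 < c.re := by simp [hc, hα]
  rw [Real.fourier_eq']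
  have heq : (fun v : ℝ => Complex.exp (↑(-2 * Real.pi * (inner ℝ v ξ : ℝ)) * Complex.I) • gfun α v)
      = Set.indicator (Ici 0) (fun v : ℝ => (v:ℂ)^2 * Complex.exp (-(c*v))) := by
    funext v
    simp only [RCLike.inner_apply, starRingEnd_apply, star_trivial, smul_eq_mul,
      Set.indicator_apply, mem_Ici, gfun]
    by_cases h : (0:ℝ) ≤ v
    · simp only [h, if_true]
      rw [mul_left_comm, ← Complex.exp_add]
      congr 2
      push_cast [hc]
      ring
    · simp [h]
  rw [heq, MeasureTheory.integral_indicator measurableSet_Ici,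
    MeasureTheory.integral_Ici_eq_integral_Ioi, key_integral hcre]

lemma fourier_ne {α : ℝ} (hα : 0 < α) (ξ : ℝ) : ((α:ℂ) + (2*Real.pi*ξ)*Complex.I) ≠ 0 := by
  intro h
  have := congrArg Complex.re h
  simp [hα.ne'] at this

lemma gfun_fourier_integrable {α : ℝ} (hα : 0 < α) :
    MeasureTheory.Integrable (𝓕 (gfun α)) := by
  have h2π : (2*Real.pi/α) ≠ 0 := by positivity
  have hbase : MeasureTheory.Integrable (fun ξ : ℝ => (1 + ((2*Real.pi/α)*ξ)^2)⁻¹) :=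
    (integrable_comp_mul_left_iff (fun x : ℝ => (1+x^2)⁻¹) h2π).mpr integrable_inv_one_add_sq
  refine MeasureTheory.Integrable.mono' ((hbase.const_mul (2/α^3))) ?_ ?_
  · have : 𝓕 (gfun α) = fun ξ : ℝ => 2 / ((α:ℂ) + (2*Real.pi*ξ)*Complex.I)^3 := by
      funext ξ; exact gfun_fourier hα ξ
    rw [this]
    refine Continuous.aestronglyMeasurable ?_
    exact continuous_const.div (by fun_prop) (fun ξ => pow_ne_zero _ (fourier_ne hα ξ))
  · refine MeasureTheory.ae_of_all _ fun ξ => ?_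
    rw [gfun_fourier hα ξ]
    set c : ℂ := (α:ℂ) + (2*Real.pi*ξ)*Complex.I with hc
    have hnc : α ≤ ‖c‖ := by
      have := Complex.abs_re_le_norm c
      rw [hc] at this ⊢
      simp only [Complex.add_re, Complex.ofReal_re, Complex.mul_re, Complex.I_re,
        Complex.I_im] at this
      simpa using le_trans (le_abs_self _) (by simpa using this)
    have hnc2 : ‖c‖^2 = α^2 + (2*Real.pi*ξ)^2 := by
      have hrw : c = Complex.ofReal α + Complex.ofReal (2*Real.pi*ξ) * Complex.I := by
        rw [hc]; push_cast; ring
      rw [hrw, Complex.sq_norm, Complex.normSq_add_mul_I]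
    have hpos : (0:ℝ) < ‖c‖ := lt_of_lt_of_le hα hnc
    have hden : α^3 * (1 + ((2*Real.pi/α)*ξ)^2) ≤ ‖c‖^3 := by
      have : α^3 * (1 + ((2*Real.pi/α)*ξ)^2) = α * (α^2 + (2*Real.pi*ξ)^2) := by
        field_simp
      rw [this, ← hnc2]
      calc α * ‖c‖^2 ≤ ‖c‖ * ‖c‖^2 := by gcongr
        _ = ‖c‖^3 := by ring
    have hb : ‖(2:ℂ) / c^3‖ = 2 / ‖c‖^3 := by
      rw [norm_div, norm_pow]
      norm_num
    rw [hb]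
    have h2 : 2/α^3 * (1 + ((2*Real.pi/α)*ξ)^2)⁻¹
        = 2 / (α^3 * (1+((2*Real.pi/α)*ξ)^2)) := by
      field_simp
    rw [h2]
    gcongr

lemma gfun_inversion {α : ℝ} (hα : 0 < α) (L : ℝ) :
    (∫ ξ : ℝ, Complex.exp (↑(2 * Real.pi * (ξ * L)) * Complex.I) *
      (2 / ((α:ℂ) + (2*Real.pi*ξ)*Complex.I)^3)) = gfun α L := by
  have h := MeasureTheory.Integrable.fourierInv_fourier_eq (gfun_integrable hα)
    (gfun_fourier_integrable hα) ((gfun_cont α).continuousAt (x := L))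
  rw [Real.fourierInv_eq'] at h
  rw [← h]
  congr 1
  funext ξ
  rw [gfun_fourier hα ξ, smul_eq_mul]
  norm_num [RCLike.inner_apply]
  left
  ring_nf

open Complex Real in
theorem discontinuous_integral_cube (α y : ℝ) (hα : 0 < α) (hy : 0 < y) :
    (1 / (2 * Real.pi * Complex.I)) *
        ∫ t : ℝ, (y : ℂ) ^ ((α : ℂ) + t * Complex.I) / ((α : ℂ) + t * Complex.I) ^ 3 *
          Complex.I =
      if 1 ≤ y then ((Real.log y) ^ 2 / 2 : ℂ) else 0 := by
  set L := Real.log y with hL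
  set f : ℝ → ℂ := fun t => Complex.exp (((α:ℂ)+t*Complex.I) * L) / ((α:ℂ)+t*Complex.I)^3
    with hf
  have h1 : (∫ t : ℝ, (y:ℂ) ^ ((α:ℂ) + t*Complex.I) / ((α:ℂ)+t*Complex.I)^3 * Complex.I)
      = (∫ t : ℝ, f t) * Complex.I := by
    rw [← MeasureTheory.integral_mul_const]
    congr 1
    funext t
    rw [hf]
    congr 2
    rw [Complex.cpow_def_of_ne_zero (Complex.ofReal_ne_zero.mpr hy.ne')]
    congr 1
    rw [← Complex.ofReal_log hy.le]
    ring
  have h2 : (∫ t : ℝ, f t) = (2*Real.pi) • ∫ ξ : ℝ, f (2*Real.pi*ξ) := by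
    rw [Measure.integral_comp_mul_left f (2*Real.pi), smul_smul,
      abs_of_pos (by positivity : (0:ℝ) < (2*Real.pi)⁻¹),
      mul_inv_cancel₀ (by positivity), one_smul]
  have h3 : (∫ ξ : ℝ, f (2*Real.pi*ξ)) = (Complex.exp (↑(α*L)) / 2) *
      ∫ ξ : ℝ, Complex.exp (↑(2 * Real.pi * (ξ * L)) * Complex.I) *
        (2 / ((α:ℂ) + (2*Real.pi*ξ)*Complex.I)^3) := by
    rw [← MeasureTheory.integral_const_mul]
    congr 1
    funext ξ
    rw [hf]
    have hcc : ((α:ℂ) + ((2*Real.pi*ξ : ℝ):ℂ)*Complex.I) = ((α:ℂ)+(2*Real.pi*ξ)*Complex.I) := by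
      push_cast
      ring
    show Complex.exp (((α:ℂ) + ((2*Real.pi*ξ : ℝ):ℂ)*Complex.I) * L)
        / ((α:ℂ) + ((2*Real.pi*ξ : ℝ):ℂ)*Complex.I)^3 = _
    rw [hcc, show ((α:ℂ)+(2*Real.pi*ξ)*Complex.I) * (L:ℂ)
        = ↑(α*L) + ↑(2*Real.pi*(ξ*L))*Complex.I from by push_cast; ring, Complex.exp_add]
    ring
  rw [h1, h2, h3, gfun_inversion hα L]
  rw [Complex.real_smul]
  have hne : Complex.exp (↑(α*L)) ≠ 0 := Complex.exp_ne_zero _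
  have hπ : ((Real.pi : ℂ)) ≠ 0 := Complex.ofReal_ne_zero.mpr Real.pi_ne_zero
  by_cases h : 1 ≤ y
  · rw [if_pos h]
    have hL0 : (0:ℝ) ≤ L := Real.log_nonneg h
    have hg : gfun α L = (L:ℂ)^2 * Complex.exp (-((α:ℂ)*L)) := by
      simp [gfun, hL0]
    rw [hg, show Complex.exp (-((α:ℂ)*(L:ℂ))) = (Complex.exp (↑(α*L)))⁻¹ from by
      rw [← Complex.exp_neg]; congr 1; push_cast; ring]
    push_cast
    field_simp
  · rw [if_neg h]
    have hL0 : L < 0 := Real.log_neg hy (lt_of_not_ge h)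
    have hg : gfun α L = 0 := by
      simp [gfun, not_le.mpr hL0]
    rw [hg]
    simp
end

section
/- With Λ_x as above, for every prime p ≤ x³ one has |Λ_x(p) − Λ(p)| ≤ C (log p)³ / (log x)² for an absolute constant C. -/
open ArithmeticFunction in
noncomputable def LambdaX (x : ℝ) (n : ℕ) : ℝ :=
  if (n : ℝ) ≤ x then Λ n
  else if (n : ℝ) ≤ x ^ 2 then
    Λ n * ((Real.log (x ^ 3 / n)) ^ 2 - 2 * (Real.log (x ^ 2 / n)) ^ 2) /
      (2 * (Real.log x) ^ 2)
  else if (n : ℝ) ≤ x ^ 3 then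
    Λ n * (Real.log (x ^ 3 / n)) ^ 2 / (2 * (Real.log x) ^ 2)
  else 0

open ArithmeticFunction in
theorem LambdaX_sub_vonMangoldt_bound :
    ∃ C : ℝ, ∀ x : ℝ, 1 < x → ∀ p : ℕ, p.Prime → (p : ℝ) ≤ x ^ 3 →
      |LambdaX x p - Λ p| ≤ C * (Real.log p) ^ 3 / (Real.log x) ^ 2 := by
  refine ⟨1, fun x hx p hp hp3 => ?_⟩
  have hx0 : (0:ℝ) < x := lt_trans one_pos hx
  have hL : 0 < Real.log x := Real.log_pos hx
  have hp1 : (1:ℝ) < p := by exact_mod_cast hp.one_lt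
  have hp0 : (0:ℝ) < p := lt_trans one_pos hp1
  have ht : 0 < Real.log p := Real.log_pos hp1
  have hΛ : Λ p = Real.log p := ArithmeticFunction.vonMangoldt_apply_prime hp
  set L := Real.log x with hLdef
  set t := Real.log p with htdef
  have hlog3 : Real.log (x ^ 3 / (p:ℝ)) = 3 * L - t := by
    rw [Real.log_div (by positivity) (ne_of_gt hp0), Real.log_pow]
    push_cast; ring
  have hlog2 : Real.log (x ^ 2 / (p:ℝ)) = 2 * L - t := by
    rw [Real.log_div (by positivity) (ne_of_gt hp0), Real.log_pow]
    push_cast; ring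
  have hRHS : 0 ≤ 1 * t ^ 3 / L ^ 2 := by positivity
  unfold LambdaX
  by_cases h1 : (p:ℝ) ≤ x
  · simp only [h1, if_true, hΛ, sub_self, abs_zero]
    positivity
  · have htL : L < t := Real.log_lt_log hx0 (not_le.mp h1)
    by_cases h2 : (p:ℝ) ≤ x ^ 2
    · have ht2 : t ≤ 2 * L := by
        have := Real.log_le_log hp0 h2
        rwa [Real.log_pow] at this
      simp only [h1, h2, if_true, if_false, hΛ, hlog3, hlog2]
      have hne : (2 * L ^ 2) ≠ 0 := by positivity
      have heq : t * ((3 * L - t) ^ 2 - 2 * (2 * L - t) ^ 2) / (2 * L ^ 2) - t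
          = (-(t * (t - L) ^ 2)) / (2 * L ^ 2) := by
        field_simp; ring
      rw [heq, abs_div, abs_of_pos (by positivity : (0:ℝ) < 2 * L ^ 2), abs_neg,
        abs_of_nonneg (by positivity : (0:ℝ) ≤ t * (t - L) ^ 2),
        div_le_div_iff₀ (by positivity) (by positivity)]
      have key : t * (t - L) ^ 2 ≤ t ^ 3 := by nlinarith
      nlinarith [mul_le_mul_of_nonneg_right key (sq_nonneg L), mul_pos ht (mul_pos ht ht), sq_nonneg L]
    · have h3 : (p:ℝ) ≤ x ^ 3 := hp3
      have ht2 : 2 * L < t := by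
        have := Real.log_lt_log (by positivity : (0:ℝ) < x ^ 2) (not_le.mp h2)
        rwa [Real.log_pow] at this
      have ht3 : t ≤ 3 * L := by
        have := Real.log_le_log hp0 h3
        rwa [Real.log_pow] at this
      simp only [h1, h2, h3, if_true, if_false, hΛ, hlog3]
      have heq : t * (3 * L - t) ^ 2 / (2 * L ^ 2) - t
          = (t * (3 * L - t) ^ 2 - 2 * t * L ^ 2) / (2 * L ^ 2) := by
        field_simp
      rw [heq, abs_div, abs_of_pos (by positivity : (0:ℝ) < 2 * L ^ 2),
        div_le_div_iff₀ (by positivity) (by positivity)]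
      have hA : |t * (3 * L - t) ^ 2 - 2 * t * L ^ 2| ≤ 2 * t ^ 3 := by
        rw [abs_le]
        constructor
        · nlinarith [sq_nonneg (3 * L - t), mul_pos ht (mul_pos ht ht), mul_pos hL hL]
        · nlinarith [mul_nonneg ht.le (sq_nonneg (3 * L - t)), mul_pos ht (mul_pos ht ht)]
      nlinarith [mul_le_mul_of_nonneg_right hA (sq_nonneg L)]
end

section
/- Let (λ(p))_{p prime} be real numbers with |λ(p)| ≤ 2 for all p, and let n ≥ 1. Then for x ≥ 2, ∑_{p₁,…,p_{2n} ≤ x, p₁⋯p_n = p_{n+1}⋯p_{2n}} (λ(p₁)⋯λ(p_{2n}))/(p₁⋯p_n) = n!·(∑_{p ≤ x} λ(p)²/p)^n + O_n((∑_{p ≤ x} λ(p)²/p + 1)^{n−2} · C) for some constant depending only on n, where the main term comes from tuples with (p_{n+1},…,p_{2n}) a permutation of (p₁,…,p_n) with all p_i distinct. -/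
open Finset

private lemma half_lt {n : ℕ} {M : Type*} [CommMonoid M] (hn : 0 < n) (p : Fin (2*n) → M) :
    (∏ i ∈ Finset.univ.filter (fun i : Fin (2*n) => (i : ℕ) < n), p i)
      = ∏ k : Fin n, p ⟨(k : ℕ), by omega⟩ := by
  refine Finset.prod_nbij' (fun a => (⟨(a : ℕ) % n, Nat.mod_lt _ hn⟩ : Fin n))
    (fun b => (⟨(b : ℕ), by omega⟩ : Fin (2*n))) (fun a ha => Finset.mem_univ _)
    (fun b hb => ?_) (fun a ha => ?_) (fun b hb => ?_) (fun a ha => ?_)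
  · simp only [Finset.mem_filter, Finset.mem_univ, true_and]
    exact b.2
  · simp only [Finset.mem_filter, Finset.mem_univ, true_and] at ha
    exact Fin.ext (by simp [Nat.mod_eq_of_lt ha])
  · exact Fin.ext (by simp [Nat.mod_eq_of_lt b.2])
  · simp only [Finset.mem_filter, Finset.mem_univ, true_and] at ha
    congr 1
    exact Fin.ext (by simp [Nat.mod_eq_of_lt ha])

private lemma half_ge {n : ℕ} {M : Type*} [CommMonoid M] (hn : 0 < n) (p : Fin (2*n) → M) :
    (∏ i ∈ Finset.univ.filter (fun i : Fin (2*n) => n ≤ (i : ℕ)), p i)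
      = ∏ k : Fin n, p ⟨n + (k : ℕ), by omega⟩ := by
  refine Finset.prod_nbij' (fun a => (⟨(a : ℕ) - n, by have := a.2; omega⟩ : Fin n))
    (fun b => (⟨n + (b : ℕ), by have := b.2; omega⟩ : Fin (2*n))) (fun a ha => Finset.mem_univ _)
    (fun b hb => ?_) (fun a ha => ?_) (fun b hb => ?_) (fun a ha => ?_)
  · simp only [Finset.mem_filter, Finset.mem_univ, true_and]
    omega
  · simp only [Finset.mem_filter, Finset.mem_univ, true_and] at ha
    exact Fin.ext (by simp; omega)
  · exact Fin.ext (by simp)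
  · simp only [Finset.mem_filter, Finset.mem_univ, true_and] at ha
    congr 1
    exact Fin.ext (by simp; omega)

private lemma full_split {n : ℕ} {M : Type*} [CommMonoid M] (hn : 0 < n) (p : Fin (2*n) → M) :
    ∏ i : Fin (2*n), p i
      = (∏ k : Fin n, p ⟨(k : ℕ), by omega⟩) * ∏ k : Fin n, p ⟨n + (k : ℕ), by omega⟩ := by
  rw [← Finset.prod_filter_mul_prod_filter_not Finset.univ (fun i : Fin (2*n) => (i : ℕ) < n) p,
    half_lt hn]
  congr 1
  rw [← half_ge hn]
  apply Finset.prod_congr _ (fun _ _ => rfl)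
  apply Finset.filter_congr
  intro i _
  simp [not_lt]

private lemma exists_comp_perm {n : ℕ} {a b : Fin n → ℕ}
    (ha : ∀ i, (a i).Prime) (hb : ∀ i, (b i).Prime) (h : (∏ i, b i) = ∏ i, a i) :
    ∃ σ : Equiv.Perm (Fin n), a ∘ σ = b := by
  have hpa : List.Perm (List.ofFn a) ((∏ i, a i).primeFactorsList) :=
    Nat.primeFactorsList_unique (by rw [List.prod_ofFn]) (by
      intro p hp
      rw [List.mem_ofFn] at hp
      obtain ⟨i, rfl⟩ := hp
      exact ha i)
  have hpb : List.Perm (List.ofFn b) ((∏ i, a i).primeFactorsList) :=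
    Nat.primeFactorsList_unique (by rw [List.prod_ofFn]; exact h) (by
      intro p hp
      rw [List.mem_ofFn] at hp
      obtain ⟨i, rfl⟩ := hp
      exact hb i)
  have hperm : List.Perm (List.ofFn b) (List.ofFn a) := hpb.trans hpa.symm
  have e : a ∘ Tuple.sort a = b ∘ Tuple.sort b := by
    apply List.ofFn_injective
    haveI : IsAntisymm ℕ (· ≤ ·) := ⟨fun _ _ h1 h2 => le_antisymm h1 h2⟩
    refine (fun h1 h2 h3 => List.Perm.eq_of_sortedLE h2 h3 h1) ?_ ?_ ?_
    · exact ((Tuple.sort a).ofFn_comp_perm a).trans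
        (hperm.symm.trans ((Tuple.sort b).ofFn_comp_perm b).symm)
    · exact List.sortedLE_ofFn_iff.mpr (Tuple.monotone_sort a)
    · exact List.sortedLE_ofFn_iff.mpr (Tuple.monotone_sort b)
  refine ⟨(Tuple.sort b).symm.trans (Tuple.sort a), funext fun i => ?_⟩
  have := congrFun e ((Tuple.sort b).symm i)
  simpa using this

private lemma filter_prod_eq_image {n : ℕ} {P : Finset ℕ} (hP : ∀ p ∈ P, p.Prime)
    (a : Fin n → ℕ) (ha : ∀ i, a i ∈ P) :
    (Fintype.piFinset fun _ : Fin n => P).filter (fun b => (∏ i, b i) = ∏ i, a i)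
      = Finset.image (fun σ : Equiv.Perm (Fin n) => a ∘ σ) Finset.univ := by
  ext b
  simp only [Finset.mem_filter, Fintype.mem_piFinset, Finset.mem_image, Finset.mem_univ, true_and]
  constructor
  · rintro ⟨hmem, hprod⟩
    obtain ⟨σ, hσ⟩ := exists_comp_perm (fun i => hP _ (ha i)) (fun i => hP _ (hmem i)) hprod
    exact ⟨σ, hσ⟩
  · rintro ⟨σ, rfl⟩
    exact ⟨fun i => ha (σ i), Equiv.prod_comp σ a⟩

set_option maxHeartbeats 1000000 in
theorem diagonal_moment_asymptotic (n : ℕ) (hn : 1 ≤ n) :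
    ∃ C : ℝ, ∀ x : ℝ, 2 ≤ x → ∀ lam : ℕ → ℝ, (∀ p : ℕ, p.Prime → |lam p| ≤ 2) →
      |(∑ p ∈ (Fintype.piFinset fun _ : Fin (2 * n) =>
            (Finset.Iic ⌊x⌋₊).filter Nat.Prime).filter
            (fun p => (∏ i ∈ Finset.univ.filter (fun i : Fin (2 * n) => (i : ℕ) < n), p i) =
              ∏ i ∈ Finset.univ.filter (fun i : Fin (2 * n) => n ≤ (i : ℕ)), p i),
          (∏ i, lam (p i)) /
            ∏ i ∈ Finset.univ.filter (fun i : Fin (2 * n) => (i : ℕ) < n), (p i : ℝ)) -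
        (Nat.factorial n : ℝ) *
          (∑ p ∈ (Finset.Iic ⌊x⌋₊).filter Nat.Prime, (lam p) ^ 2 / p) ^ n| ≤
      C * ((∑ p ∈ (Finset.Iic ⌊x⌋₊).filter Nat.Prime, (lam p) ^ 2 / p) + 1) ^ (n - 2) := by
  classical
  have hn0 : 0 < n := hn
  set K : ℝ := ∑' k : ℕ, 1 / (k : ℝ) ^ 2 with hKdef
  have hK0 : 0 ≤ K := tsum_nonneg (fun k => by positivity)
  refine ⟨(n.factorial : ℝ) * ((n : ℝ) * (n : ℝ) * (16 * K)), ?_⟩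
  intro x hx lam hlam
  set P := (Finset.Iic ⌊x⌋₊).filter Nat.Prime with hPdef
  have hP : ∀ p ∈ P, p.Prime := fun p hp => (Finset.mem_filter.mp hp).2
  set f : ℕ → ℝ := fun p => lam p ^ 2 / p with hfdef
  have hf0 : ∀ p, 0 ≤ f p := fun p => by positivity
  set T : ℝ := ∑ p ∈ P, f p with hTdef
  have hT0 : 0 ≤ T := Finset.sum_nonneg fun p _ => hf0 p
  set g : (Fin n → ℕ) → ℝ := fun a => ∏ i, f (a i) with hgdef
  have hg0 : ∀ a, 0 ≤ g a := fun a => Finset.prod_nonneg fun i _ => hf0 _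
  set Pn := Fintype.piFinset (fun _ : Fin n => P) with hPn
  set N : (Fin n → ℕ) → ℕ :=
    fun a => ((Fintype.piFinset fun _ : Fin n => P).filter
      (fun b => (∏ i, b i) = ∏ i, a i)).card with hNdef
  have hNle : ∀ a ∈ Pn, N a ≤ n.factorial := by
    intro a ha
    rw [hPn, Fintype.mem_piFinset] at ha
    show ((Fintype.piFinset fun _ : Fin n => P).filter
      (fun b => (∏ i, b i) = ∏ i, a i)).card ≤ n.factorial
    rw [filter_prod_eq_image hP a ha]
    calc (Finset.image (fun σ : Equiv.Perm (Fin n) => a ∘ σ) Finset.univ).card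
        ≤ (Finset.univ : Finset (Equiv.Perm (Fin n))).card := Finset.card_image_le
      _ = n.factorial := by rw [Finset.card_univ, Fintype.card_perm, Fintype.card_fin]
  have hNeq : ∀ a ∈ Pn, Function.Injective a → N a = n.factorial := by
    intro a ha hinj
    rw [hPn, Fintype.mem_piFinset] at ha
    show ((Fintype.piFinset fun _ : Fin n => P).filter
      (fun b => (∏ i, b i) = ∏ i, a i)).card = n.factorial
    have hinj2 : Function.Injective (fun σ : Equiv.Perm (Fin n) => a ∘ σ) :=
      fun σ τ h => Equiv.ext fun i => hinj (congrFun h i)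
    rw [filter_prod_eq_image hP a ha, Finset.card_image_of_injective _ hinj2,
      Finset.card_univ, Fintype.card_perm, Fintype.card_fin]
  have step1 : (∑ p ∈ (Fintype.piFinset fun _ : Fin (2 * n) => P).filter
        (fun p => (∏ i ∈ Finset.univ.filter (fun i : Fin (2 * n) => (i : ℕ) < n), p i) =
          ∏ i ∈ Finset.univ.filter (fun i : Fin (2 * n) => n ≤ (i : ℕ)), p i),
      (∏ i, lam (p i)) /
        ∏ i ∈ Finset.univ.filter (fun i : Fin (2 * n) => (i : ℕ) < n), (p i : ℝ))
      = ∑ a ∈ Pn, ∑ b ∈ Pn.filter (fun b => (∏ i, b i) = ∏ i, a i),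
          ((∏ i, lam (a i)) * (∏ i, lam (b i))) / ∏ i, ((a i : ℕ) : ℝ) := by
    rw [Finset.sum_sigma']
    refine Finset.sum_nbij'
      (i := fun p => (⟨fun k : Fin n => p ⟨(k : ℕ), by omega⟩,
        fun k : Fin n => p ⟨n + (k : ℕ), by omega⟩⟩ : Σ _ : Fin n → ℕ, Fin n → ℕ))
      (j := fun y => fun k : Fin (2*n) =>
        if h : (k : ℕ) < n then y.1 ⟨(k : ℕ), h⟩ else y.2 ⟨(k : ℕ) - n, by have := k.2; omega⟩)
      ?_ ?_ ?_ ?_ ?_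
    · intro p hp
      rw [Finset.mem_filter, Fintype.mem_piFinset] at hp
      obtain ⟨hp1, hp2⟩ := hp
      rw [Finset.mem_sigma]
      refine ⟨?_, Finset.mem_filter.mpr ⟨?_, ?_⟩⟩
      · rw [hPn, Fintype.mem_piFinset]; exact fun k => hp1 _
      · rw [hPn, Fintype.mem_piFinset]; exact fun k => hp1 _
      · rw [← half_lt hn0 p, ← half_ge hn0 p]; exact hp2.symm
    · intro y hy
      rw [Finset.mem_sigma, hPn] at hy
      obtain ⟨hy1, hy2⟩ := hy
      rw [Finset.mem_filter, Fintype.mem_piFinset] at hy2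
      rw [Fintype.mem_piFinset] at hy1
      rw [Finset.mem_filter, Fintype.mem_piFinset]
      constructor
      · intro k
        beta_reduce
        by_cases h : (k : ℕ) < n
        · rw [dif_pos h]; exact hy1 _
        · rw [dif_neg h]; exact hy2.1 _
      · rw [half_lt hn0, half_ge hn0]
        have e1 : ∀ k : Fin n,
            (if h : ((⟨(k : ℕ), by omega⟩ : Fin (2*n)) : ℕ) < n then y.1 ⟨(k : ℕ), h⟩
              else y.2 ⟨(k : ℕ) - n, by omega⟩) = y.1 k := by
          intro k
          rw [dif_pos k.2]
        have e2 : ∀ k : Fin n,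
            (if h : ((⟨n + (k : ℕ), by omega⟩ : Fin (2*n)) : ℕ) < n then y.1 ⟨n + (k : ℕ), h⟩
              else y.2 ⟨n + (k : ℕ) - n, by omega⟩) = y.2 k := by
          intro k
          rw [dif_neg (Nat.not_lt.mpr (Nat.le_add_right n (k : ℕ)))]
          exact congrArg _ (Fin.ext (show n + (k : ℕ) - n = (k : ℕ) by omega))
        rw [Finset.prod_congr rfl (fun k _ => e1 k), Finset.prod_congr rfl (fun k _ => e2 k)]
        exact hy2.2.symm
    · intro p hp
      funext k
      beta_reduce
      by_cases h : (k : ℕ) < n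
      · rw [dif_pos h]
      · rw [dif_neg h]
        have hkk : (⟨n + ((k : ℕ) - n), by omega⟩ : Fin (2*n)) = k :=
          Fin.ext (show n + ((k : ℕ) - n) = (k : ℕ) by omega)
        exact congrArg p hkk
    · intro y hy
      obtain ⟨y1, y2⟩ := y
      beta_reduce
      congr 1
      · funext k
        beta_reduce
        rw [dif_pos k.2]
      · funext k
        beta_reduce
        rw [dif_neg (Nat.not_lt.mpr (Nat.le_add_right n (k : ℕ)))]
        exact congrArg _ (Fin.ext (show n + (k : ℕ) - n = (k : ℕ) by omega))
    · intro p hp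
      rw [full_split hn0 (fun i => lam (p i)), half_lt hn0 (fun i => ((p i : ℕ) : ℝ))]
  have step2 : ∀ a ∈ Pn, (∑ b ∈ Pn.filter (fun b => (∏ i, b i) = ∏ i, a i),
      ((∏ i, lam (a i)) * (∏ i, lam (b i))) / ∏ i, ((a i : ℕ) : ℝ)) = (N a : ℝ) * g a := by
    intro a ha
    rw [hPn, Fintype.mem_piFinset] at ha
    have hconst : ∀ b ∈ Pn.filter (fun b => (∏ i, b i) = ∏ i, a i),
        (∏ i, lam (b i)) = ∏ i, lam (a i) := by
      intro b hb
      rw [hPn, filter_prod_eq_image hP a ha] at hb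
      simp only [Finset.mem_image, Finset.mem_univ, true_and] at hb
      obtain ⟨σ, rfl⟩ := hb
      exact Equiv.prod_comp σ (fun i => lam (a i))
    calc ∑ b ∈ Pn.filter (fun b => (∏ i, b i) = ∏ i, a i),
          ((∏ i, lam (a i)) * (∏ i, lam (b i))) / ∏ i, ((a i : ℕ) : ℝ)
        = ∑ _b ∈ Pn.filter (fun b => (∏ i, b i) = ∏ i, a i),
          ((∏ i, lam (a i)) * (∏ i, lam (a i))) / ∏ i, ((a i : ℕ) : ℝ) :=
          Finset.sum_congr rfl (fun b hb => by rw [hconst b hb])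
      _ = (N a : ℝ) * g a := by
          rw [Finset.sum_const, nsmul_eq_mul]
          have hcard : (Pn.filter (fun b => (∏ i, b i) = ∏ i, a i)).card = N a := by
            rw [hPn, hNdef]
          rw [hcard]
          congr 1
          rw [hgdef]
          simp only [hfdef]
          rw [Finset.prod_div_distrib, Finset.prod_pow]
          ring
  have hC : (n.factorial : ℝ) * T ^ n = ∑ a ∈ Pn, (n.factorial : ℝ) * g a := by
    rw [← Finset.mul_sum]
    congr 1
    have h1 : T ^ n = ∏ _i : Fin n, T := by
      rw [Finset.prod_const, Finset.card_univ, Fintype.card_fin]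
    rw [h1, hTdef, Finset.prod_univ_sum]
  have hS2 : (∑ p ∈ P, 16 / (p : ℝ) ^ 2) ≤ 16 * K := by
    have hsum : Summable (fun k : ℕ => 1 / (k : ℝ) ^ 2) :=
      Real.summable_one_div_nat_pow.mpr one_lt_two
    have h2 : (∑ p ∈ P, 1 / (p : ℝ) ^ 2) ≤ K :=
      Summable.sum_le_tsum P (fun k _ => by positivity) hsum
    calc (∑ p ∈ P, 16 / (p : ℝ) ^ 2) = 16 * ∑ p ∈ P, 1 / (p : ℝ) ^ 2 := by
          rw [Finset.mul_sum]
          exact Finset.sum_congr rfl fun p _ => by ring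
      _ ≤ 16 * K := by linarith
  have hpair : ∀ i j : Fin n, i ≠ j →
      (∑ a ∈ Pn.filter (fun a => a i = a j), g a) ≤ (16 * K) * T ^ (n - 2) := by
    intro i j hij
    set F : Fin n → ℕ → ℝ :=
      fun k p => if k = i then 16 / (p : ℝ) ^ 2 else if k = j then 1 else f p with hFdef
    set Q : Fin n → Finset ℕ := fun k => if k = j then {0} else P with hQdef
    have hF0 : ∀ k p, 0 ≤ F k p := by
      intro k p
      simp only [hFdef]
      split_ifs
      · positivity
      · norm_num
      · exact hf0 p
    have hji : j ∈ (Finset.univ : Finset (Fin n)).erase i :=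
      Finset.mem_erase.mpr ⟨hij.symm, Finset.mem_univ j⟩
    have hcard : (((Finset.univ : Finset (Fin n)).erase i).erase j).card = n - 2 := by
      rw [Finset.card_erase_of_mem hji, Finset.card_erase_of_mem (Finset.mem_univ i),
        Finset.card_univ, Fintype.card_fin]
      omega
    have hsplit : ∀ u : Fin n → ℝ,
        (∏ k, u k) = u i * (u j * ∏ k ∈ ((Finset.univ : Finset (Fin n)).erase i).erase j, u k) := by
      intro u
      rw [Finset.mul_prod_erase _ u hji, Finset.mul_prod_erase _ u (Finset.mem_univ i)]
    have hstep1 : ∀ a ∈ Pn.filter (fun a => a i = a j),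
        g a ≤ ∏ k, F k (Function.update a j 0 k) := by
      intro a ha
      rw [Finset.mem_filter, hPn, Fintype.mem_piFinset] at ha
      obtain ⟨haP, haij⟩ := ha
      have hga : g a = ∏ k, f (a k) := by rw [hgdef]
      rw [hga, hsplit (fun k => f (a k)), hsplit (fun k => F k (Function.update a j 0 k))]
      have hupd_i : Function.update a j 0 i = a i := Function.update_of_ne hij 0 a
      have hF_i : F i (Function.update a j 0 i) = 16 / ((a i : ℕ) : ℝ) ^ 2 := by
        rw [hupd_i]
        simp [hFdef]
      have hF_j : F j (Function.update a j 0 j) = 1 := by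
        simp [hFdef, hij.symm]
      have hrest : (∏ k ∈ ((Finset.univ : Finset (Fin n)).erase i).erase j,
          F k (Function.update a j 0 k))
          = ∏ k ∈ ((Finset.univ : Finset (Fin n)).erase i).erase j, f (a k) := by
        refine Finset.prod_congr rfl ?_
        intro k hk
        rw [Finset.mem_erase] at hk
        obtain ⟨hkj, hk2⟩ := hk
        rw [Finset.mem_erase] at hk2
        rw [Function.update_of_ne hkj]
        simp [hFdef, hk2.1, hkj]
      rw [hF_i, hF_j, hrest]
      have hR0 : (0:ℝ) ≤ ∏ k ∈ ((Finset.univ : Finset (Fin n)).erase i).erase j, f (a k) :=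
        Finset.prod_nonneg fun k _ => hf0 _
      have hprime : (a i).Prime := hP _ (haP i)
      have hpos : (0:ℝ) < ((a i : ℕ) : ℝ) ^ 2 := by
        have h2 : (0:ℝ) < ((a i : ℕ) : ℝ) := by exact_mod_cast hprime.pos
        positivity
      have hlam2 : lam (a i) ^ 2 ≤ 4 := by
        have h := hlam (a i) hprime
        nlinarith [sq_abs (lam (a i)), abs_nonneg (lam (a i))]
      have hff : f (a i) * f (a j) ≤ 16 / ((a i : ℕ) : ℝ) ^ 2 := by
        rw [← haij]
        have hfa : f (a i) = lam (a i) ^ 2 / ((a i : ℕ) : ℝ) := by rw [hfdef]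
        rw [hfa, div_mul_div_comm]
        have hnum : lam (a i) ^ 2 * lam (a i) ^ 2 ≤ 16 := by nlinarith [sq_nonneg (lam (a i))]
        have hden : ((a i : ℕ) : ℝ) * ((a i : ℕ) : ℝ) = ((a i : ℕ) : ℝ) ^ 2 := by ring
        rw [hden]
        exact div_le_div_of_nonneg_right hnum hpos.le |>.trans_eq rfl
      calc f (a i) * (f (a j) * ∏ k ∈ ((Finset.univ : Finset (Fin n)).erase i).erase j, f (a k))
          = (f (a i) * f (a j)) * ∏ k ∈ ((Finset.univ : Finset (Fin n)).erase i).erase j,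
              f (a k) := by ring
        _ ≤ (16 / ((a i : ℕ) : ℝ) ^ 2) * ∏ k ∈ ((Finset.univ : Finset (Fin n)).erase i).erase j,
              f (a k) := mul_le_mul_of_nonneg_right hff hR0
        _ = 16 / ((a i : ℕ) : ℝ) ^ 2 * (1 * ∏ k ∈ ((Finset.univ : Finset (Fin n)).erase i).erase j,
              f (a k)) := by ring
    have hinj2 : ∀ a ∈ Pn.filter (fun a => a i = a j), ∀ b ∈ Pn.filter (fun a => a i = a j),
        Function.update a j 0 = Function.update b j 0 → a = b := by
      intro a ha b hb h
      rw [Finset.mem_filter] at ha hb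
      funext k
      by_cases hk : k = j
      · subst hk
        have h1 := congrFun h i
        rw [Function.update_of_ne hij, Function.update_of_ne hij] at h1
        rw [← ha.2, ← hb.2]
        exact h1
      · have h1 := congrFun h k
        rwa [Function.update_of_ne hk, Function.update_of_ne hk] at h1
    have hsubset : (Pn.filter (fun a => a i = a j)).image (fun a => Function.update a j 0)
        ⊆ Fintype.piFinset Q := by
      intro c hc
      rw [Finset.mem_image] at hc
      obtain ⟨a, ha, rfl⟩ := hc
      rw [Finset.mem_filter, hPn, Fintype.mem_piFinset] at ha
      rw [Fintype.mem_piFinset]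
      intro k
      by_cases hk : k = j
      · subst hk
        simp [hQdef]
      · rw [Function.update_of_ne hk]
        simp only [hQdef]
        rw [if_neg hk]
        exact ha.1 k
    have heval : (∏ k, ∑ p ∈ Q k, F k p) = (∑ p ∈ P, 16 / (p : ℝ) ^ 2) * T ^ (n - 2) := by
      rw [hsplit (fun k => ∑ p ∈ Q k, F k p)]
      have h1 : (∑ p ∈ Q i, F i p) = ∑ p ∈ P, 16 / (p : ℝ) ^ 2 := by
        have hQi : Q i = P := by simp [hQdef, hij]
        rw [hQi]
        exact Finset.sum_congr rfl fun p _ => by simp [hFdef]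
      have h2 : (∑ p ∈ Q j, F j p) = 1 := by
        have hQj : Q j = {0} := by simp [hQdef]
        rw [hQj, Finset.sum_singleton]
        simp [hFdef, hij.symm]
      have h3 : (∏ k ∈ ((Finset.univ : Finset (Fin n)).erase i).erase j, ∑ p ∈ Q k, F k p)
          = T ^ (n - 2) := by
        have hc : ∀ k ∈ ((Finset.univ : Finset (Fin n)).erase i).erase j,
            (∑ p ∈ Q k, F k p) = T := by
          intro k hk
          rw [Finset.mem_erase] at hk
          obtain ⟨hkj, hk2⟩ := hk
          rw [Finset.mem_erase] at hk2
          have hQk : Q k = P := by simp [hQdef, hkj]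
          rw [hQk, hTdef]
          exact Finset.sum_congr rfl fun p _ => by simp [hFdef, hk2.1, hkj]
        rw [Finset.prod_congr rfl hc, Finset.prod_const, hcard]
      rw [h1, h2, h3]
      ring
    calc ∑ a ∈ Pn.filter (fun a => a i = a j), g a
        ≤ ∑ a ∈ Pn.filter (fun a => a i = a j), ∏ k, F k (Function.update a j 0 k) :=
          Finset.sum_le_sum hstep1
      _ = ∑ c ∈ (Pn.filter (fun a => a i = a j)).image (fun a => Function.update a j 0),
            ∏ k, F k (c k) := by rw [Finset.sum_image hinj2]
      _ ≤ ∑ c ∈ Fintype.piFinset Q, ∏ k, F k (c k) :=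
          Finset.sum_le_sum_of_subset_of_nonneg hsubset
            (fun c _ _ => Finset.prod_nonneg fun k _ => hF0 k _)
      _ = ∏ k, ∑ p ∈ Q k, F k p := (Finset.prod_univ_sum Q F).symm
      _ = (∑ p ∈ P, 16 / (p : ℝ) ^ 2) * T ^ (n - 2) := heval
      _ ≤ (16 * K) * T ^ (n - 2) := mul_le_mul_of_nonneg_right hS2 (pow_nonneg hT0 _)
  have hD : (∑ a ∈ Pn.filter (fun a => ¬ Function.Injective a), g a)
      ≤ ∑ q ∈ (Finset.univ : Finset (Fin n × Fin n)).filter (fun q => q.1 ≠ q.2),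
          ∑ a ∈ Pn.filter (fun a => a q.1 = a q.2), g a := by
    have hR : (∑ q ∈ (Finset.univ : Finset (Fin n × Fin n)).filter (fun q => q.1 ≠ q.2),
        ∑ a ∈ Pn.filter (fun a => a q.1 = a q.2), g a)
        = ∑ a ∈ Pn, ∑ q ∈ (Finset.univ : Finset (Fin n × Fin n)).filter (fun q => q.1 ≠ q.2),
            if a q.1 = a q.2 then g a else 0 := by
      rw [← Finset.sum_comm]
      exact Finset.sum_congr rfl fun q _ => Finset.sum_filter _ _
    rw [hR, Finset.sum_filter]
    refine Finset.sum_le_sum ?_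
    intro a _
    by_cases hinja : Function.Injective a
    · rw [if_neg (not_not_intro hinja)]
      exact Finset.sum_nonneg fun q _ => by
        by_cases hcase : a q.1 = a q.2 <;> simp [hcase, hg0 a]
    · rw [if_pos hinja]
      rw [Function.not_injective_iff] at hinja
      obtain ⟨i0, j0, hval, hne⟩ := hinja
      have hq : (i0, j0) ∈ (Finset.univ : Finset (Fin n × Fin n)).filter (fun q => q.1 ≠ q.2) := by
        simp [hne]
      have hle := Finset.single_le_sum
        (f := fun q : Fin n × Fin n => if a q.1 = a q.2 then g a else 0)
        (fun q _ => by by_cases hcase : a q.1 = a q.2 <;> simp [hcase, hg0 a]) hq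
      simpa [hval] using hle
  have hSum2 : (∑ a ∈ Pn, ∑ b ∈ Pn.filter (fun b => (∏ i, b i) = ∏ i, a i),
      ((∏ i, lam (a i)) * (∏ i, lam (b i))) / ∏ i, ((a i : ℕ) : ℝ))
      = ∑ a ∈ Pn, (N a : ℝ) * g a := Finset.sum_congr rfl step2
  rw [step1, hSum2, hC, ← Finset.sum_sub_distrib]
  have hsub : (∑ a ∈ Pn, ((N a : ℝ) * g a - (n.factorial : ℝ) * g a))
      = ∑ a ∈ Pn, ((N a : ℝ) - (n.factorial : ℝ)) * g a :=
    Finset.sum_congr rfl fun a _ => by ring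
  rw [hsub]
  calc |∑ a ∈ Pn, ((N a : ℝ) - (n.factorial : ℝ)) * g a|
      ≤ ∑ a ∈ Pn, |((N a : ℝ) - (n.factorial : ℝ)) * g a| := Finset.abs_sum_le_sum_abs _ _
    _ ≤ ∑ a ∈ Pn, (if ¬ Function.Injective a then (n.factorial : ℝ) * g a else 0) := by
        refine Finset.sum_le_sum ?_
        intro a ha
        by_cases hinja : Function.Injective a
        · rw [if_neg (not_not_intro hinja), hNeq a ha hinja]
          simp
        · rw [if_pos hinja, abs_mul, abs_of_nonneg (hg0 a)]
          refine mul_le_mul_of_nonneg_right ?_ (hg0 a)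
          have h1 : (N a : ℝ) ≤ (n.factorial : ℝ) := by exact_mod_cast hNle a ha
          have h2 : (0:ℝ) ≤ (N a : ℝ) := Nat.cast_nonneg _
          rw [abs_of_nonpos (by linarith)]
          linarith
    _ = ∑ a ∈ Pn.filter (fun a => ¬ Function.Injective a), (n.factorial : ℝ) * g a :=
        (Finset.sum_filter _ _).symm
    _ = (n.factorial : ℝ) * ∑ a ∈ Pn.filter (fun a => ¬ Function.Injective a), g a := by
        rw [Finset.mul_sum]
    _ ≤ (n.factorial : ℝ) * ∑ q ∈ (Finset.univ : Finset (Fin n × Fin n)).filter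
          (fun q => q.1 ≠ q.2), ∑ a ∈ Pn.filter (fun a => a q.1 = a q.2), g a :=
        mul_le_mul_of_nonneg_left hD (Nat.cast_nonneg _)
    _ ≤ (n.factorial : ℝ) * ∑ _q ∈ (Finset.univ : Finset (Fin n × Fin n)).filter
          (fun q => q.1 ≠ q.2), ((16 * K) * T ^ (n - 2)) := by
        refine mul_le_mul_of_nonneg_left ?_ (Nat.cast_nonneg _)
        refine Finset.sum_le_sum ?_
        intro q hq
        rw [Finset.mem_filter] at hq
        exact hpair q.1 q.2 hq.2
    _ ≤ (n.factorial : ℝ) * ((n : ℝ) * (n : ℝ) * ((16 * K) * T ^ (n - 2))) := by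
        rw [Finset.sum_const, nsmul_eq_mul]
        refine mul_le_mul_of_nonneg_left ?_ (Nat.cast_nonneg _)
        refine mul_le_mul_of_nonneg_right ?_ (by positivity)
        have hcard3 : (((Finset.univ : Finset (Fin n × Fin n)).filter
            (fun q => q.1 ≠ q.2)).card : ℝ) ≤ (n : ℝ) * (n : ℝ) := by
          have h4 : ((Finset.univ : Finset (Fin n × Fin n)).filter
              (fun q => q.1 ≠ q.2)).card ≤ n * n := by
            calc _ ≤ (Finset.univ : Finset (Fin n × Fin n)).card := Finset.card_filter_le _ _
              _ = n * n := by rw [Finset.card_univ]; simp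
          exact_mod_cast h4
        exact hcard3
    _ = ((n.factorial : ℝ) * ((n : ℝ) * (n : ℝ) * (16 * K))) * T ^ (n - 2) := by ring
    _ ≤ ((n.factorial : ℝ) * ((n : ℝ) * (n : ℝ) * (16 * K))) * (T + 1) ^ (n - 2) := by
        refine mul_le_mul_of_nonneg_left (pow_le_pow_left₀ hT0 (by linarith) _) (by positivity)
end

section
/- Let x ≥ 4, σ_x ≥ 1/2 + 5/log x, and let β, σ, t, γ be real with σ ≥ σ_x, β ≤ (σ_x − 1/2)/2 + 1/2 (i.e. β − 1/2 ≤ (σ_x − 1/2)/2 with β ≤ 1). Then x^{β−σ}(1 + x^{β−σ})² / ((σ−β)² + (t−γ)²)^{3/2} ≤ (4/5)·log x · x^{1/4 − σ/2} / ((σ_x − β)² + (t−γ)²), provided additionally σ − β ≥ σ_x − β > 0 and (σ_x − 1/2) ≥ 10/log x. -/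
theorem mul_sq_add_le_sq_add_rpow_three_halves {a b c : ℝ} (ha : 0 ≤ a) (hab : a ≤ b)
    (hc : 0 ≤ c) : a * (a ^ 2 + c) ≤ (b ^ 2 + c) ^ ((3 : ℝ) / 2) := by
  have hac : 0 ≤ a ^ 2 + c := by positivity
  have hsqrt : a ≤ √(a ^ 2 + c) := Real.le_sqrt_of_sq_le (by linarith)
  calc a * (a ^ 2 + c) ≤ (a ^ 2 + c) * √(a ^ 2 + c) := by nlinarith
    _ = (a ^ 2 + c) ^ ((3 : ℝ) / 2) := by
      rw [show (3 : ℝ) / 2 = 1 + 1 / 2 by norm_num, Real.rpow_add' hac (by norm_num),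
        Real.rpow_one, Real.sqrt_eq_rpow]
    _ ≤ (b ^ 2 + c) ^ ((3 : ℝ) / 2) := by gcongr

theorem mul_one_add_sq_le_four_mul {p : ℝ} (hp : 0 ≤ p) (hp1 : p ≤ 1) :
    p * (1 + p) ^ 2 ≤ 4 * p := by
  nlinarith [mul_nonneg hp (sub_nonneg.mpr hp1)]

theorem pointwise_zero_sum_bound_general (x σx β σ t γ : ℝ)
    (hx : 4 ≤ x)
    (hβ : β - 1 / 2 ≤ (σx - 1 / 2) / 2)
    (hσ : σx ≤ σ)
    (hσxβ : 0 < σx - β)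
    (hσx10 : 10 / Real.log x ≤ σx - 1 / 2) :
    Real.rpow x (β - σ) * (1 + Real.rpow x (β - σ)) ^ 2 /
        ((σ - β) ^ 2 + (t - γ) ^ 2) ^ ((3 : ℝ) / 2) ≤
      (4 / 5) * Real.log x * Real.rpow x (1 / 4 - σ / 2) /
        ((σx - β) ^ 2 + (t - γ) ^ 2) := by
  have hL : 0 < Real.log x := Real.log_pos (by linarith)
  -- `σx - β ≥ (σx - 1/2)/2 ≥ 5 / log x`
  have hlog : 4 / (σx - β) ≤ 4 / 5 * Real.log x := by
    have := (div_le_iff₀ hL).mp hσx10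
    rw [div_le_iff₀ hσxβ]
    nlinarith
  set p := Real.rpow x (β - σ)
  set q := Real.rpow x (1 / 4 - σ / 2)
  set D := (σx - β) ^ 2 + (t - γ) ^ 2
  have hp : 0 < p := Real.rpow_pos_of_pos (by linarith) _
  have hp1 : p ≤ 1 := Real.rpow_le_one_of_one_le_of_nonpos (by linarith) (by linarith)
  have hpq : p ≤ q := Real.rpow_le_rpow_of_exponent_le (by linarith) (by linarith)
  have hq : 0 < q := Real.rpow_pos_of_pos (by linarith) _
  have hD : 0 < D := by positivity
  calc p * (1 + p) ^ 2 / ((σ - β) ^ 2 + (t - γ) ^ 2) ^ ((3 : ℝ) / 2)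
      ≤ 4 * p / ((σx - β) * D) :=
        div_le_div₀ (by positivity) (mul_one_add_sq_le_four_mul hp.le hp1) (by positivity)
          (mul_sq_add_le_sq_add_rpow_three_halves hσxβ.le (by linarith) (sq_nonneg _))
    _ ≤ 4 / (σx - β) * q / D := by
      rw [div_mul_eq_mul_div, div_div]
      gcongr
    _ ≤ 4 / 5 * Real.log x * q / D := by gcongr

theorem pointwise_zero_sum_bound (x σx β σ t γ : ℝ)
    (hx : 4 ≤ x)
    (hσx : 1 / 2 + 5 / Real.log x ≤ σx)
    (hβ : β - 1 / 2 ≤ (σx - 1 / 2) / 2) (hβ1 : β ≤ 1)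
    (hσ : σx ≤ σ)
    (hσxβ : 0 < σx - β)
    (hσx10 : 10 / Real.log x ≤ σx - 1 / 2) :
    Real.rpow x (β - σ) * (1 + Real.rpow x (β - σ)) ^ 2 /
        ((σ - β) ^ 2 + (t - γ) ^ 2) ^ ((3 : ℝ) / 2) ≤
      (4 / 5) * Real.log x * Real.rpow x (1 / 4 - σ / 2) /
        ((σx - β) ^ 2 + (t - γ) ^ 2) :=
  pointwise_zero_sum_bound_general x σx β σ t γ hx hβ hσ hσxβ hσx10
end
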